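/- arXiv:1106.0519 — 6 statements merged into one kernel-verified Lean document; each statement's English description precedes it below -/
import Mathlib

section
/- Let X be a nonnegative random variable whose distribution F is MHR. For p ∈ [1,∞), define α_p = inf{x : F(x) ≥ 1 - 1/p} (with α_1 = u_min). Then for all m ≥ 1 and d ≥ 1, it holds that d·α_m ≥ α_{m^d}. -/
/-!
The cumulative hazard `H = -log (1 - F)` has derivative the hazard rate `f / (1 - F)`, so it is
convex when the hazard rate is monotone. Since `H` vanishes at `a ≥ 0`, convexity makes it
superhomogeneous on the support: `d * H t ≤ H (d * t)` for `d ≥ 1`. The quantile `α_m` is where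
`H` reaches `log m`, so `H (d * α_m) ≥ d * log m = log (m ^ d)`, i.e. `α_{m^d} ≤ d * α_m`.
-/

/-- `alphaQ F p = inf {x | F x ≥ 1 - 1/p}`, the `(1 - 1/p)`-quantile of the cdf `F`. -/
noncomputable def alphaQ (F : ℝ → ℝ) (p : ℝ) : ℝ :=
  sInf {x : ℝ | 1 - 1 / p ≤ F x}

open Set Real

theorem ConvexOn.mul_apply_le_apply_mul {G : ℝ → ℝ} {a t d : ℝ}
    (hG : ConvexOn ℝ (Icc a (d * t)) G) (ha : 0 ≤ a) (hat : a < t) (hd : 1 ≤ d)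
    (hGa : G a ≤ 0) (hGdt : 0 ≤ G (d * t)) : d * G t ≤ G (d * t) := by
  have htdt : t ≤ d * t := le_mul_of_one_le_left (ha.trans hat.le) hd
  have hadt : a < d * t := hat.trans_le htdt
  have hsecant := hG.secant_mono (left_mem_Icc.2 hadt.le) ⟨hat.le, htdt⟩
    (right_mem_Icc.2 hadt.le) hat.ne' hadt.ne' htdt
  rw [div_le_div_iff₀ (sub_pos.2 hat) (sub_pos.2 hadt)] at hsecant
  refine le_of_mul_le_mul_right ?_ (sub_pos.2 hadt)
  nlinarith [mul_nonneg (sub_nonneg.2 htdt) (neg_nonneg.2 hGa),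
    mul_nonneg (sub_nonneg.2 (le_mul_of_one_le_left ha hd)) hGdt]

theorem hasDerivAt_neg_log_one_sub {F : ℝ → ℝ} {f x : ℝ} (hF : HasDerivAt F f x)
    (hx : F x ≠ 1) : HasDerivAt (fun x => -log (1 - F x)) (f / (1 - F x)) x := by
  simpa only [neg_div, neg_neg, Pi.neg_def] using
    ((hF.const_sub 1).log (sub_ne_zero.2 hx.symm)).neg

theorem convexOn_neg_log_one_sub {F f : ℝ → ℝ} {a b : ℝ} (hcont : ContinuousOn F (Icc a b))
    (hlt : ∀ x ∈ Icc a b, F x < 1) (hderiv : ∀ x ∈ Ioo a b, HasDerivAt F (f x) x)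
    (hmono : MonotoneOn (fun x => f x / (1 - F x)) (Ioo a b)) :
    ConvexOn ℝ (Icc a b) (fun x => -log (1 - F x)) := by
  have hhazard x (hx : x ∈ Ioo a b) := hasDerivAt_neg_log_one_sub (hderiv x hx)
    (hlt x (Ioo_subset_Icc_self hx)).ne
  refine MonotoneOn.convexOn_of_deriv (convex_Icc a b) ?_ ?_ ?_
  · exact ((continuousOn_const.sub hcont).log fun x hx => (sub_pos.2 (hlt x hx)).ne').neg
  · rw [interior_Icc]
    exact fun x hx => (hhazard x hx).differentiableAt.differentiableWithinAt
  · rw [interior_Icc]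
    exact hmono.congr fun x hx => (hhazard x hx).deriv.symm

theorem mul_neg_log_one_sub_le {F f : ℝ → ℝ} {a b t d : ℝ} (ha : 0 ≤ a) (hFmono : Monotone F)
    (hFcont : Continuous F) (hFa : F a = 0) (hderiv : ∀ x ∈ Ico a b, HasDerivAt F (f x) x)
    (hMHR : MonotoneOn (fun x => f x / (1 - F x)) (Ico a b)) (hat : a < t) (hd : 1 ≤ d)
    (hdtb : d * t < b) (hdt1 : F (d * t) < 1) (hdt0 : 0 ≤ F (d * t)) :
    d * -log (1 - F t) ≤ -log (1 - F (d * t)) := by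
  have hconv := convexOn_neg_log_one_sub hFcont.continuousOn
    (fun x hx => (hFmono hx.2).trans_lt hdt1) (fun x hx => hderiv x ⟨hx.1.le, hx.2.trans hdtb⟩)
    (hMHR.mono fun x hx => ⟨hx.1.le, hx.2.trans hdtb⟩)
  exact hconv.mul_apply_le_apply_mul ha hat hd (by simp [hFa])
    (neg_nonneg.2 (log_nonpos (by linarith) (by linarith)))

theorem Real.log_le_neg_log_one_sub_iff {q y : ℝ} (hq : 0 < q) (hy : y < 1) :
    log q ≤ -log (1 - y) ↔ 1 - 1 / q ≤ y := by
  rw [← log_inv, log_le_log_iff hq (inv_pos.2 (sub_pos.2 hy)), le_inv_comm₀ hq (sub_pos.2 hy),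
    one_div]
  constructor <;> intro h <;> linarith

section alphaQ

variable {F : ℝ → ℝ} {p x : ℝ}

theorem alphaQ_le (hbdd : BddBelow {x | 1 - 1 / p ≤ F x}) (hx : 1 - 1 / p ≤ F x) :
    alphaQ F p ≤ x :=
  csInf_le hbdd hx

theorem le_apply_alphaQ (hF : Continuous F) (hbdd : BddBelow {x | 1 - 1 / p ≤ F x})
    (hne : {x | 1 - 1 / p ≤ F x}.Nonempty) : 1 - 1 / p ≤ F (alphaQ F p) :=
  (isClosed_le continuous_const hF).csInf_mem hne hbdd

theorem lt_of_one_sub_inv_le {a : ℝ} (hF0 : ∀ x ≤ a, F x = 0) (hp : 1 < p)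
    (hx : 1 - 1 / p ≤ F x) : a < x := by
  by_contra! hxa
  have : 1 / p < 1 := (div_lt_one (by linarith)).2 hp
  rw [hF0 x hxa] at hx
  linarith

end alphaQ

theorem mhr_alpha_pow_general (a b : ℝ) (ha : 0 ≤ a) (F f : ℝ → ℝ)
    (hFmono : Monotone F) (hFcont : Continuous F)
    (hF0 : ∀ x ≤ a, F x = 0) (hF1 : ∀ x, b ≤ x → F x = 1)
    (hderiv : ∀ x ∈ Set.Ico a b, HasDerivAt F (f x) x)
    (hMHR : MonotoneOn (fun x => f x / (1 - F x)) (Set.Ico a b))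
    (m d : ℝ) (hm : 1 ≤ m) (hd : 1 ≤ d) :
    alphaQ F (m ^ d) ≤ d * alphaQ F m := by
  rcases hm.eq_or_lt with rfl | hm1
  · -- `alphaQ F 1 = sInf univ`, which is the junk value `0`.
    have hFnn x : 0 ≤ F x := by
      rcases le_total x a with hxa | hax
      · exact (hF0 x hxa).ge
      · exact (hF0 a le_rfl).symm.trans_le (hFmono hax)
    simp [alphaQ, hFnn]
  have hm0 : 0 < m := one_pos.trans hm1
  have hbdd q (hq : 1 < q) : BddBelow {x | 1 - 1 / q ≤ F x} :=
    ⟨a, fun x hx => (lt_of_one_sub_inv_le hF0 hq hx).le⟩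
  set t := alphaQ F m
  have ht : 1 - 1 / m ≤ F t := le_apply_alphaQ hFcont (hbdd m hm1)
    ⟨b, show 1 - 1 / m ≤ F b by linarith [hF1 b le_rfl, one_div_pos.2 hm0]⟩
  have hat : a < t := lt_of_one_sub_inv_le hF0 hm1 ht
  refine alphaQ_le (hbdd _ (one_lt_rpow hm1 (by linarith))) ?_
  rcases le_or_gt 1 (F (d * t)) with hdt1 | hdt1
  · linarith [one_div_pos.2 (rpow_pos_of_pos hm0 d)]
  have hdtb : d * t < b := not_le.1 fun h => hdt1.ne (hF1 _ h)
  have hFt : F t ≤ F (d * t) := hFmono (le_mul_of_one_le_left (ha.trans hat.le) hd)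
  rw [← log_le_neg_log_one_sub_iff (rpow_pos_of_pos hm0 d) hdt1, log_rpow hm0]
  calc d * log m ≤ d * -log (1 - F t) := mul_le_mul_of_nonneg_left
        ((log_le_neg_log_one_sub_iff hm0 (hFt.trans_lt hdt1)).2 ht) (by linarith)
    _ ≤ -log (1 - F (d * t)) := mul_neg_log_one_sub_le ha hFmono hFcont (hF0 a le_rfl) hderiv
        hMHR hat hd hdtb hdt1 (by linarith [(div_lt_one hm0).2 hm1])

/-- **Quantile growth for MHR distributions.**
If `X` is a nonnegative random variable whose cdf `F` (with density `f`, supported on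
`[a, b]` with `a ≥ 0`) has monotone hazard rate, then for all real `m ≥ 1` and `d ≥ 1`,
`d · α_m ≥ α_{m^d}` where `α_p = inf {x | F x ≥ 1 - 1/p}`. -/
theorem mhr_alpha_pow (a b : ℝ) (ha : 0 ≤ a) (hab : a < b) (F f : ℝ → ℝ)
    (hFmono : Monotone F) (hFcont : Continuous F)
    (hF0 : ∀ x ≤ a, F x = 0) (hF1 : ∀ x, b ≤ x → F x = 1)
    (hderiv : ∀ x ∈ Set.Ico a b, HasDerivAt F (f x) x)
    (hMHR : MonotoneOn (fun x => f x / (1 - F x)) (Set.Ico a b))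
    (m d : ℝ) (hm : 1 ≤ m) (hd : 1 ≤ d) :
    alphaQ F (m ^ d) ≤ d * alphaQ F m :=
  mhr_alpha_pow_general a b ha F f hFmono hFcont hF0 hF1 hderiv hMHR m d hm hd
end

section
/- Let X be a nonnegative random variable whose distribution is MHR, and define Con[X ≥ x] = ∫_x^∞ t·f(t) dt (the contribution to E[X] from values ≥ x). Then for all m ≥ 2, Con[X ≥ α_m] ≤ 6·α_m/m. -/
open MeasureTheory

/-!
Let `α = α_m`, so `1 - F α = 1/m`, and let `h = f α / (1 - F α)` be the hazard rate at `α`.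
Integrating by parts, `Con[X ≥ α] = α (1 - F α) + ∫_α^b (1 - F) = α/m + ∫_α^b (1 - F)`.
Monotonicity of the hazard rate gives `f ≤ h (1 - F) ≤ h` on `[a, α]` and `f ≥ h (1 - F)` on
`[α, b]`. The first bound yields `1/2 ≤ F α ≤ h α`, the second
`h ∫_α^b (1 - F) ≤ ∫_α^b f = 1/m`. Hence `∫_α^b (1 - F) ≤ 2α/m` and `Con[X ≥ α] ≤ 3α/m`.
-/

open Set

section Quantile

variable {F : ℝ → ℝ}

theorem apply_sInf_setOf_le_eq (hF : Continuous F) {c : ℝ} (hne : {x | c ≤ F x}.Nonempty)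
    (hbdd : BddBelow {x | c ≤ F x}) : F (sInf {x | c ≤ F x}) = c := by
  set q := sInf {x | c ≤ F x}
  refine le_antisymm ?_ ((isClosed_le continuous_const hF).csInf_mem hne hbdd)
  refine le_of_tendsto ((hF.tendsto q).mono_left (nhdsWithin_le_nhds (s := Iio q))) ?_
  filter_upwards [self_mem_nhdsWithin] with x (hx : x < q)
  exact (not_le.1 fun hcx => (csInf_le hbdd hcx).not_gt hx).le

variable {a b p : ℝ}

theorem lt_of_one_sub_one_div_le (hF0 : ∀ x ≤ a, F x = 0) (hp : 1 < p) {x : ℝ}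
    (hx : 1 - 1 / p ≤ F x) : a < x := by
  by_contra! hxa
  rw [hF0 x hxa, sub_nonpos, le_div_iff₀ (by linarith)] at hx
  linarith

theorem bddBelow_setOf_one_sub_one_div_le (hF0 : ∀ x ≤ a, F x = 0) (hp : 1 < p) :
    BddBelow {x | 1 - 1 / p ≤ F x} :=
  ⟨a, fun _ hx => (lt_of_one_sub_one_div_le hF0 hp hx).le⟩

theorem one_sub_one_div_le_of_eq_one (hFb : F b = 1) (hp : 0 < p) : 1 - 1 / p ≤ F b := by
  rw [hFb]
  exact sub_le_self 1 (one_div_nonneg.2 hp.le)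

theorem apply_alphaQ (hF : Continuous F) (hF0 : ∀ x ≤ a, F x = 0) (hFb : F b = 1)
    (hp : 1 < p) : F (alphaQ F p) = 1 - 1 / p :=
  apply_sInf_setOf_le_eq hF ⟨b, one_sub_one_div_le_of_eq_one hFb (by linarith)⟩
    (bddBelow_setOf_one_sub_one_div_le hF0 hp)

theorem alphaQ_mem_Ioo (hF : Continuous F) (hF0 : ∀ x ≤ a, F x = 0) (hFb : F b = 1)
    (hp : 1 < p) : alphaQ F p ∈ Ioo a b := by
  have hFα := apply_alphaQ hF hF0 hFb hp
  refine ⟨lt_of_one_sub_one_div_le hF0 hp hFα.ge, lt_of_le_of_ne ?_ fun hαb => ?_⟩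
  · exact csInf_le (bddBelow_setOf_one_sub_one_div_le hF0 hp)
      (one_sub_one_div_le_of_eq_one hFb (by linarith))
  · rw [hαb, hFb] at hFα
    linarith [one_div_pos.2 (zero_lt_one.trans hp)]

end Quantile

section Hazard

variable {F f : ℝ → ℝ} {a b s t : ℝ}

theorem density_le_hazard_mul (hMHR : MonotoneOn (fun x => f x / (1 - F x)) (Ico a b))
    (ht : t ∈ Ico a b) (hs : s ∈ Ico a b) (hts : t ≤ s) (hSt : 0 < 1 - F t) :
    f t ≤ f s / (1 - F s) * (1 - F t) :=
  (div_le_iff₀ hSt).1 (hMHR ht hs hts)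

theorem hazard_mul_le_density (hMHR : MonotoneOn (fun x => f x / (1 - F x)) (Ico a b))
    (hs : s ∈ Ico a b) (ht : t ∈ Ico a b) (hst : s ≤ t) (hft : 0 ≤ f t)
    (hSt : 0 ≤ 1 - F t) : f s / (1 - F s) * (1 - F t) ≤ f t := by
  rcases hSt.eq_or_lt with hS0 | hSpos
  · rwa [← hS0, mul_zero]
  · exact (le_div_iff₀ hSpos).1 (hMHR hs ht hst)

theorem sub_le_hazard_mul_sub (hFmono : Monotone F) (hFcont : Continuous F)
    (hderiv : ∀ x ∈ Ico a b, HasDerivAt F (f x) x)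
    (hMHR : MonotoneOn (fun x => f x / (1 - F x)) (Ico a b))
    (hf : IntervalIntegrable f volume a s) (hs : s ∈ Ico a b) (hfs : 0 ≤ f s) (hFa : 0 ≤ F a)
    (hFs : F s < 1) : F s - F a ≤ f s / (1 - F s) * (s - a) := by
  have hFTC : ∫ t in a..s, f t = F s - F a :=
    intervalIntegral.integral_eq_sub_of_hasDerivAt_of_le hs.1 hFcont.continuousOn
      (fun x hx => hderiv x ⟨hx.1.le, hx.2.trans hs.2⟩) hf
  have hbound : ∀ t ∈ Icc a s, f t ≤ f s / (1 - F s) := fun t ht =>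
    calc f t ≤ f s / (1 - F s) * (1 - F t) :=
          density_le_hazard_mul hMHR ⟨ht.1, ht.2.trans_lt hs.2⟩ hs ht.2
            (by linarith [hFmono ht.2])
      _ ≤ f s / (1 - F s) :=
          mul_le_of_le_one_right (div_nonneg hfs (by linarith)) (by linarith [hFmono ht.1])
  have hmono := intervalIntegral.integral_mono_on hs.1 hf intervalIntegrable_const hbound
  rwa [hFTC, intervalIntegral.integral_const, smul_eq_mul, mul_comm] at hmono

theorem hazard_mul_integral_one_sub_le (hFmono : Monotone F) (hFcont : Continuous F)
    (hderiv : ∀ x ∈ Ico a b, HasDerivAt F (f x) x)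
    (hMHR : MonotoneOn (fun x => f x / (1 - F x)) (Ico a b)) (hfnn : ∀ x, 0 ≤ f x)
    (hf : IntervalIntegrable f volume s b) (hs : s ∈ Ico a b) (hFb : F b ≤ 1) :
    f s / (1 - F s) * ∫ t in s..b, (1 - F t) ≤ F b - F s := by
  rw [← intervalIntegral.integral_const_mul,
    ← intervalIntegral.integral_eq_sub_of_hasDerivAt_of_le hs.2.le hFcont.continuousOn
      (fun x hx => hderiv x ⟨hs.1.trans hx.1.le, hx.2⟩) hf]
  refine intervalIntegral.integral_mono_on_of_le_Ioo hs.2.le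
    ((continuous_const.mul (continuous_const.sub hFcont)).intervalIntegrable s b) hf
    fun t ht => hazard_mul_le_density hMHR hs ⟨hs.1.trans ht.1.le, ht.2⟩ ht.1.le (hfnn t)
      (by linarith [hFmono ht.2.le])

end Hazard

section TailContribution

variable {F f : ℝ → ℝ} {a b : ℝ}

theorem integral_mul_density_eq (hab : a ≤ b) (hFcont : ContinuousOn F (Icc a b))
    (hderiv : ∀ x ∈ Ioo a b, HasDerivAt F (f x) x) (hf : IntervalIntegrable f volume a b)
    (hFb : F b = 1) :
    ∫ t in a..b, t * f t = a * (1 - F a) + ∫ t in a..b, (1 - F t) := by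
  have hIBP := intervalIntegral.integral_mul_deriv_eq_deriv_mul_of_hasDerivAt (u := id)
    (u' := fun _ => 1) (v := fun t => F t - 1) (a := a) (b := b) continuousOn_id
    ((hFcont.sub continuousOn_const).mono (by rw [uIcc_of_le hab]))
    (fun x _ => hasDerivAt_id x)
    (fun x hx => (hderiv x (by rwa [min_eq_left hab, max_eq_right hab] at hx)).sub_const 1)
    intervalIntegrable_const hf
  simp only [id_eq, hFb, sub_self, mul_zero, one_mul] at hIBP
  rw [hIBP, show (fun t => 1 - F t) = fun t => -(F t - 1) by ext; ring,
    intervalIntegral.integral_neg]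
  ring

theorem setIntegral_Ici_eq_intervalIntegral {g : ℝ → ℝ} (hab : a ≤ b)
    (hg : ∀ t, b < t → g t = 0) : ∫ t in Ici a, g t = ∫ t in a..b, g t := by
  rw [intervalIntegral.integral_of_le hab, ← integral_Icc_eq_integral_Ioc]
  exact setIntegral_eq_of_subset_of_forall_sdiff_eq_zero measurableSet_Ici Icc_subset_Ici_self
    fun t ht => hg t (lt_of_not_ge fun htb => ht.2 ⟨ht.1, htb⟩)

end TailContribution

theorem mhr_tail_contribution_general (a b : ℝ) (ha : 0 ≤ a) (F f : ℝ → ℝ)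
    (hFmono : Monotone F) (hFcont : Continuous F)
    (hF0 : ∀ x ≤ a, F x = 0) (hF1 : ∀ x, b ≤ x → F x = 1)
    (hderiv : ∀ x ∈ Set.Ico a b, HasDerivAt F (f x) x)
    (hMHR : MonotoneOn (fun x => f x / (1 - F x)) (Set.Ico a b))
    (hfnn : ∀ x, 0 ≤ f x) (hfzero : ∀ x, x ∉ Set.Icc a b → f x = 0)
    (hfint : ∀ c d : ℝ, IntervalIntegrable f volume c d)
    (m : ℝ) (hm : 2 ≤ m) :
    ∫ t in Set.Ici (alphaQ F m), t * f t ≤ 6 * alphaQ F m / m := by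
  have hm1 : 1 < m := by linarith
  have hFb : F b = 1 := hF1 b le_rfl
  obtain ⟨haα, hαb⟩ := alphaQ_mem_Ioo hFcont hF0 hFb hm1
  have hFα := apply_alphaQ hFcont hF0 hFb hm1
  set α := alphaQ F m
  set h := f α / (1 - F α)
  have hSα : 1 - F α = 1 / m := by rw [hFα]; ring
  have hm0 : 0 < 1 / m := by positivity
  have hh : 0 ≤ h := div_nonneg (hfnn α) (by rw [hSα]; positivity)
  have h_lower : 1 / 2 ≤ h * α := by
    have hFα_le := sub_le_hazard_mul_sub hFmono hFcont hderiv hMHR (hfint a α) ⟨haα.le, hαb⟩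
      (hfnn α) (hF0 a le_rfl).ge (by linarith)
    have hm_half : 1 / m ≤ 1 / 2 := one_div_le_one_div_of_le two_pos hm
    nlinarith [hF0 a le_rfl, mul_nonneg hh ha]
  have h_tail : h * ∫ t in α..b, (1 - F t) ≤ 1 / m :=
    (hazard_mul_integral_one_sub_le hFmono hFcont hderiv hMHR hfnn (hfint α b) ⟨haα.le, hαb⟩
      hFb.le).trans_eq (by rw [hFb, hFα]; ring)
  have h_integral : ∫ t in α..b, (1 - F t) ≤ 2 * α / m := by
    refine le_of_mul_le_mul_left (h_tail.trans ?_) (by nlinarith)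
    rw [mul_div_assoc', div_le_div_iff_of_pos_right (by linarith)]
    linarith
  rw [setIntegral_Ici_eq_intervalIntegral hαb.le
      fun t ht => by rw [hfzero t fun ht' => ht.not_ge ht'.2, mul_zero],
    integral_mul_density_eq hαb.le hFcont.continuousOn
      (fun x hx => hderiv x ⟨haα.le.trans hx.1.le, hx.2⟩) (hfint α b) hFb, hSα, mul_one_div]
  calc α / m + ∫ t in α..b, (1 - F t) ≤ α / m + 2 * α / m := by gcongr
    _ = 3 * α / m := by ring
    _ ≤ 6 * α / m := by gcongr <;> linarith

/-- **Tail contribution of MHR distributions.**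
Let `X` be a nonnegative random variable with MHR cdf `F` and density `f` supported on
`[a, b]` with `a ≥ 0`, and let `Con[X ≥ x] = ∫_x^∞ t · f t dt`.  Then for all `m ≥ 2`,
`Con[X ≥ α_m] ≤ 6 · α_m / m`. -/
theorem mhr_tail_contribution (a b : ℝ) (ha : 0 ≤ a) (hab : a < b) (F f : ℝ → ℝ)
    (hFmono : Monotone F) (hFcont : Continuous F)
    (hF0 : ∀ x ≤ a, F x = 0) (hF1 : ∀ x, b ≤ x → F x = 1)
    (hderiv : ∀ x ∈ Set.Ico a b, HasDerivAt F (f x) x)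
    (hMHR : MonotoneOn (fun x => f x / (1 - F x)) (Set.Ico a b))
    (hfnn : ∀ x, 0 ≤ f x) (hfzero : ∀ x, x ∉ Set.Icc a b → f x = 0)
    (hfint : ∀ c d : ℝ, IntervalIntegrable f volume c d)
    (m : ℝ) (hm : 2 ≤ m) :
    ∫ t in Set.Ici (alphaQ F m), t * f t ≤ 6 * alphaQ F m / m :=
  mhr_tail_contribution_general a b ha F f hFmono hFcont hF0 hF1 hderiv hMHR hfnn hfzero hfint m hm
end

section
/- Let X_1,...,X_n be independent (not necessarily identically distributed) random variables with MHR distributions. Then there exists an anchoring point β > 0 such that Pr[max_i X_i ≥ β/2] ≥ 1 - 1/√e, and for all ε ∈ (0, 1/4), ∫_{2β log(1/ε)}^∞ t · f_{max_i X_i}(t) dt ≤ 36·β·ε·log(1/ε). -/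
/-!
Take `q` with `∏ i, F i q = e^{-1/2}` and `β = 2q`. A monotone hazard rate makes `log (1 - F i)`
concave on `[a i, b i)` with value `0` at `a i ≥ 0`, so `1 - F i t ≤ (1 - F i q) ^ (t / q)` for
`t ≥ q`. As `∑ i, (1 - F i q) ≤ -log ∏ i, F i q = 1/2`, the union bound gives
`Pr[max_i X_i > t] ≤ 2 ^ (-t / q)`. Integrating by parts,
`∫_T^∞ t f_max t dt = T Pr[max_i X_i > T] + ∫_T^∞ Pr[max_i X_i > t] dt`, which at
`T = 2β log(1/ε)` is `O(β ε² log(1/ε))`.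
-/

open MeasureTheory Set Filter Topology Real

namespace Finset

variable {ι : Type*}

lemma one_sub_prod_le_sum_one_sub (s : Finset ι) {x : ι → ℝ} (h0 : ∀ i ∈ s, 0 ≤ x i)
    (h1 : ∀ i ∈ s, x i ≤ 1) : 1 - ∏ i ∈ s, x i ≤ ∑ i ∈ s, (1 - x i) := by
  classical
  induction s using Finset.induction_on with
  | empty => simp
  | insert j s hj ih =>
    rw [prod_insert hj, sum_insert hj]
    have h0' : ∀ i ∈ s, 0 ≤ x i := fun i hi => h0 i (mem_insert_of_mem hi)
    have h1' : ∀ i ∈ s, x i ≤ 1 := fun i hi => h1 i (mem_insert_of_mem hi)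
    have hj1 := h1 j (mem_insert_self j s)
    have hprod : ∏ i ∈ s, x i ≤ 1 := prod_le_one h0' h1'
    linarith [ih h0' h1', mul_nonneg (sub_nonneg.2 hj1) (sub_nonneg.2 hprod)]

lemma sum_rpow_le_rpow_sum (s : Finset ι) {x : ι → ℝ} (hx : ∀ i ∈ s, 0 ≤ x i) {p : ℝ}
    (hp : 1 ≤ p) : ∑ i ∈ s, x i ^ p ≤ (∑ i ∈ s, x i) ^ p := by
  have hsplit : ∀ y : ℝ, 0 ≤ y → y ^ p = y * y ^ (p - 1) := fun y hy => by
    rw [← rpow_one_add' hy (by linarith), add_sub_cancel]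
  calc ∑ i ∈ s, x i ^ p = ∑ i ∈ s, x i * x i ^ (p - 1) :=
        sum_congr rfl fun i hi => hsplit _ (hx i hi)
    _ ≤ ∑ i ∈ s, x i * (∑ j ∈ s, x j) ^ (p - 1) :=
        sum_le_sum fun i hi => mul_le_mul_of_nonneg_left
          (rpow_le_rpow (hx i hi) (single_le_sum hx hi) (by linarith)) (hx i hi)
    _ = (∑ i ∈ s, x i) ^ p := by rw [← sum_mul, hsplit _ (sum_nonneg hx)]

lemma sum_one_sub_le_neg_log_prod (s : Finset ι) {x : ι → ℝ} (hx : ∀ i ∈ s, 0 < x i) :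
    ∑ i ∈ s, (1 - x i) ≤ -log (∏ i ∈ s, x i) := by
  rw [log_prod fun i hi => (hx i hi).ne', ← sum_neg_distrib]
  exact sum_le_sum fun i hi => by linarith [log_le_sub_one_of_pos (hx i hi)]

end Finset

section HazardRate

variable {F f : ℝ → ℝ} {A B : ℝ}

lemma cdf_nonneg (hM : Monotone F) (h0 : ∀ x ≤ A, F x = 0) (x : ℝ) : 0 ≤ F x :=
  (h0 _ (min_le_right x A)).symm.trans_le (hM (min_le_left x A))

lemma cdf_le_one (hM : Monotone F) (h1 : ∀ x, B ≤ x → F x = 1) (x : ℝ) : F x ≤ 1 :=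
  (hM (le_max_left x B)).trans_eq (h1 _ (le_max_right x B))

lemma cdf_lt_one_of_hazard_monotoneOn (hM : Monotone F) (h0 : ∀ x ≤ A, F x = 0)
    (h1 : ∀ x, B ≤ x → F x = 1) (hd : ∀ x, HasDerivAt F (f x) x)
    (hmhr : MonotoneOn (fun x => f x / (1 - F x)) (Ico A B)) {x : ℝ} (hx : x ∈ Ico A B) :
    F x < 1 := by
  refine (cdf_le_one hM h1 x).lt_of_ne fun hFx => ?_
  -- Where `F = 1` the hazard rate is `f / 0 = 0`, so monotonicity forces `f = 0` on `[A, x]`.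
  have hf0 : ∀ y ∈ Icc A x, f y = 0 := by
    intro y hy
    rcases (cdf_le_one hM h1 y).lt_or_eq with hy1 | hy1
    · have hle : f y ≤ 0 := by
        simpa [hFx, div_le_iff₀ (sub_pos.2 hy1)] using hmhr ⟨hy.1, hy.2.trans_lt hx.2⟩ hx hy.2
      exact le_antisymm hle ((hd y).deriv ▸ hM.deriv_nonneg)
    · have hmax : IsLocalMax F y := Eventually.of_forall fun z => hy1 ▸ cdf_le_one hM h1 z
      exact hmax.hasDerivAt_eq_zero (hd y)
  have hconst := constant_of_has_deriv_right_zero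
    (fun y _ => (hd y).continuousAt.continuousWithinAt)
    (fun y hy => hf0 y (Ico_subset_Icc_self hy) ▸ (hd y).hasDerivWithinAt) x ⟨hx.1, le_rfl⟩
  rw [hFx, h0 A le_rfl] at hconst
  exact one_ne_zero hconst

lemma concaveOn_log_one_sub_of_hazard_monotoneOn (hM : Monotone F) (h0 : ∀ x ≤ A, F x = 0)
    (h1 : ∀ x, B ≤ x → F x = 1) (hd : ∀ x, HasDerivAt F (f x) x)
    (hmhr : MonotoneOn (fun x => f x / (1 - F x)) (Ico A B)) :
    ConcaveOn ℝ (Ico A B) (fun x => log (1 - F x)) := by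
  have hder : ∀ y ∈ Ico A B, HasDerivAt (fun x => log (1 - F x)) (-(f y / (1 - F y))) y :=
    fun y hy => by
      simpa [neg_div] using ((hd y).const_sub 1).log
        (sub_pos.2 (cdf_lt_one_of_hazard_monotoneOn hM h0 h1 hd hmhr hy)).ne'
  refine AntitoneOn.concaveOn_of_deriv (convex_Ico A B)
    (fun y hy => (hder y hy).continuousAt.continuousWithinAt) ?_ ?_ <;> rw [interior_Ico]
  · exact fun y hy => (hder y (Ioo_subset_Ico_self hy)).differentiableAt.differentiableWithinAt
  · intro y hy z hz hyz
    rw [(hder y (Ioo_subset_Ico_self hy)).deriv, (hder z (Ioo_subset_Ico_self hz)).deriv,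
      neg_le_neg_iff]
    exact hmhr (Ioo_subset_Ico_self hy) (Ioo_subset_Ico_self hz) hyz

lemma one_sub_cdf_le_rpow_of_hazard_monotoneOn (hA : 0 ≤ A) (hM : Monotone F)
    (h0 : ∀ x ≤ A, F x = 0) (h1 : ∀ x, B ≤ x → F x = 1) (hd : ∀ x, HasDerivAt F (f x) x)
    (hmhr : MonotoneOn (fun x => f x / (1 - F x)) (Ico A B)) {q t : ℝ} (hq : 0 < F q)
    (hqt : q ≤ t) : 1 - F t ≤ (1 - F q) ^ (t / q) := by
  have hAq : A < q := lt_of_not_ge fun h => hq.ne' (h0 q h)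
  rcases le_or_gt B t with hBt | htB
  · rw [h1 t hBt, sub_self]
    exact rpow_nonneg (sub_nonneg.2 (cdf_le_one hM h1 q)) _
  have hAt : A < t := hAq.trans_le hqt
  have hq' : q ∈ Ico A B := ⟨hAq.le, hqt.trans_lt htB⟩
  have ht' : t ∈ Ico A B := ⟨hAt.le, htB⟩
  have hpos : ∀ y ∈ Ico A B, 0 < 1 - F y := fun y hy =>
    sub_pos.2 (cdf_lt_one_of_hazard_monotoneOn hM h0 h1 hd hmhr hy)
  set φ : ℝ → ℝ := fun x => log (1 - F x)
  have hslope : φ t / (t - A) ≤ φ q / (q - A) := by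
    have := (concaveOn_log_one_sub_of_hazard_monotoneOn hM h0 h1 hd hmhr).neg.secant_mono
      (left_mem_Ico.2 (hAq.trans hq'.2)) hq' ht' hAq.ne' hAt.ne' hqt
    simp only [Pi.neg_apply, h0 A le_rfl, sub_zero, log_one, neg_zero] at this
    rwa [neg_div, neg_div, neg_le_neg_iff] at this
  have hφq : φ q ≤ 0 := log_nonpos (hpos q hq').le (by linarith)
  have hratio : t / q ≤ (t - A) / (q - A) := by
    rw [div_le_div_iff₀ (hA.trans_lt hAq) (by linarith)]
    nlinarith
  have hφt : φ t ≤ t / q * φ q := calc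
    φ t = (t - A) * (φ t / (t - A)) := by rw [mul_div_cancel₀ _ (sub_pos.2 hAt).ne']
    _ ≤ (t - A) * (φ q / (q - A)) := mul_le_mul_of_nonneg_left hslope (by linarith)
    _ = (t - A) / (q - A) * φ q := by ring
    _ ≤ t / q * φ q := mul_le_mul_of_nonpos_right hratio hφq
  calc 1 - F t = exp (φ t) := (exp_log (hpos t ht')).symm
    _ ≤ exp (t / q * φ q) := exp_le_exp.2 hφt
    _ = (1 - F q) ^ (t / q) := by rw [rpow_def_of_pos (hpos q hq'), mul_comm]

end HazardRate

section Maximum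

variable {ι : Type*} [Fintype ι] {F f : ι → ℝ → ℝ} {a b : ι → ℝ}

lemma prod_cdf_eq_one (h1 : ∀ i x, b i ≤ x → F i x = 1) {x : ℝ} (hx : ⨆ i, b i ≤ x) :
    ∏ i, F i x = 1 :=
  Finset.prod_eq_one fun i _ => h1 i x ((le_ciSup (Set.finite_range b).bddAbove i).trans hx)

lemma exists_pos_prod_cdf_eq [Nonempty ι] (ha : ∀ i, 0 ≤ a i) (hc : ∀ i, Continuous (F i))
    (h0 : ∀ i, ∀ x ≤ a i, F i x = 0) (h1 : ∀ i x, b i ≤ x → F i x = 1) {y : ℝ}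
    (hy0 : 0 < y) (hy1 : y ≤ 1) : ∃ q, 0 < q ∧ ∏ i, F i q = y := by
  obtain ⟨i₀⟩ := ‹Nonempty ι›
  have hG0 : ∏ i, F i 0 = 0 := Finset.prod_eq_zero (Finset.mem_univ i₀) (h0 i₀ 0 (ha i₀))
  have hGU : ∏ i, F i (max 0 (⨆ i, b i)) = 1 := prod_cdf_eq_one h1 (le_max_right _ _)
  obtain ⟨q, hq, hGq⟩ := intermediate_value_Icc (le_max_left 0 (⨆ i, b i))
    (continuous_finsetProd _ fun i _ => hc i).continuousOn
    (by rw [hG0, hGU]; exact ⟨hy0.le, hy1⟩)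
  refine ⟨q, hq.1.lt_of_ne ?_, hGq⟩
  rintro rfl
  exact hy0.ne' (hGq.symm.trans hG0)

lemma one_sub_prod_cdf_le_half_rpow (ha : ∀ i, 0 ≤ a i) (hM : ∀ i, Monotone (F i))
    (h0 : ∀ i, ∀ x ≤ a i, F i x = 0) (h1 : ∀ i x, b i ≤ x → F i x = 1)
    (hd : ∀ i x, HasDerivAt (F i) (f i x) x)
    (hmhr : ∀ i, MonotoneOn (fun x => f i x / (1 - F i x)) (Ico (a i) (b i)))
    {q t : ℝ} (hq0 : 0 < q) (hq : exp (-(1 / 2)) ≤ ∏ i, F i q) (hqt : q ≤ t) :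
    1 - ∏ i, F i t ≤ (1 / 2) ^ (t / q) := by
  have hFq : ∀ i, 0 < F i q := fun i => (cdf_nonneg (hM i) (h0 i) q).lt_of_ne fun h => by
    linarith [exp_pos (-(1 / 2)),
      Finset.prod_eq_zero (f := fun j => F j q) (Finset.mem_univ i) h.symm]
  have hsum : ∑ i, (1 - F i q) ≤ 1 / 2 := calc
    ∑ i, (1 - F i q) ≤ -log (∏ i, F i q) :=
        Finset.sum_one_sub_le_neg_log_prod _ fun i _ => hFq i
    _ ≤ 1 / 2 := by linarith [log_le_log (exp_pos _) hq, log_exp (-(1 / 2))]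
  calc 1 - ∏ i, F i t ≤ ∑ i, (1 - F i t) := Finset.one_sub_prod_le_sum_one_sub _
        (fun i _ => cdf_nonneg (hM i) (h0 i) t) (fun i _ => cdf_le_one (hM i) (h1 i) t)
    _ ≤ ∑ i, (1 - F i q) ^ (t / q) := Finset.sum_le_sum fun i _ =>
        one_sub_cdf_le_rpow_of_hazard_monotoneOn (ha i) (hM i) (h0 i) (h1 i) (hd i) (hmhr i)
          (hFq i) hqt
    _ ≤ (∑ i, (1 - F i q)) ^ (t / q) := Finset.sum_rpow_le_rpow_sum _
        (fun i _ => sub_nonneg.2 (cdf_le_one (hM i) (h1 i) q)) ((one_le_div hq0).2 hqt)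
    _ ≤ (1 / 2) ^ (t / q) := rpow_le_rpow (Finset.sum_nonneg fun i _ =>
        sub_nonneg.2 (cdf_le_one (hM i) (h1 i) q)) hsum (div_nonneg (hq0.le.trans hqt) hq0.le)

end Maximum

section TailIntegral

variable {G g : ℝ → ℝ} {c T U : ℝ}

lemma integral_exp_neg_mul_le (hc : 0 < c) :
    ∫ t in T..U, exp (-(c * t)) ≤ exp (-(c * T)) / c := by
  have hderiv : ∀ t, HasDerivAt (fun t => -exp (-(c * t)) / c) (exp (-(c * t))) t := fun t => by
    refine ((((hasDerivAt_id' t).const_mul c).fun_neg.exp.fun_neg.div_const c)).congr_deriv ?_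
    field_simp
  rw [intervalIntegral.integral_eq_sub_of_hasDerivAt (fun t _ => hderiv t)
    ((by fun_prop : Continuous fun t => exp (-(c * t))).intervalIntegrable _ _)]
  have := exp_pos (-(c * U))
  rw [div_sub_div_same, div_le_div_iff_of_pos_right hc]
  linarith

lemma integral_mul_deriv_eq (hG : ∀ t, HasDerivAt G (g t) t) (hU : G U = 1)
    (hint : IntervalIntegrable (fun t => t * g t) volume T U) :
    ∫ t in T..U, t * g t = T * (1 - G T) + ∫ t in T..U, (1 - G t) := by
  have hGc : Continuous G := continuous_iff_continuousAt.2 fun t => (hG t).continuousAt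
  have hsub : IntervalIntegrable (fun t => 1 - G t) volume T U :=
    (continuous_const.sub hGc).intervalIntegrable _ _
  have hderiv : ∀ t, HasDerivAt (fun t => t * (1 - G t)) ((1 - G t) - t * g t) t := fun t => by
    refine ((hasDerivAt_id' t).fun_mul ((hG t).const_sub 1)).congr_deriv ?_
    ring
  have hFTC := intervalIntegral.integral_eq_sub_of_hasDerivAt (fun t _ => hderiv t)
    (hsub.sub hint)
  rw [intervalIntegral.integral_sub hsub hint, hU, sub_self, mul_zero] at hFTC
  linarith

lemma setIntegral_Ici_mul_deriv_le {B : ℝ} (hT : 0 ≤ T) (hc : 0 < c)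
    (hG : ∀ t, HasDerivAt G (g t) t) (hB : ∀ t, B ≤ t → G t = 1)
    (htail : ∀ t, T ≤ t → 1 - G t ≤ exp (-(c * t))) :
    ∫ t in Ici T, t * g t ≤ (T + 1 / c) * exp (-(c * T)) := by
  by_cases hint : IntegrableOn (fun t => t * g t) (Ici T)
  swap
  · rw [integral_undef hint]
    positivity
  set U := max T B
  have hg0 : ∀ t, U < t → g t = 0 := fun t ht =>
    (hG t).unique ((hasDerivAt_const t 1).congr_of_eventuallyEq
      (eventually_of_mem (Ioi_mem_nhds ht) fun y hy => hB y ((le_max_right T B).trans hy.le)))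
  have hsplit : ∫ t in Ici T, t * g t = ∫ t in T..U, t * g t := by
    rw [setIntegral_eq_of_subset_of_forall_sdiff_eq_zero measurableSet_Ici Icc_subset_Ici_self
      fun t ht => by rw [hg0 t (lt_of_not_ge fun h => ht.2 ⟨ht.1, h⟩), mul_zero],
      integral_Icc_eq_integral_Ioc, intervalIntegral.integral_of_le (le_max_left T B)]
  have hGc : Continuous G := continuous_iff_continuousAt.2 fun t => (hG t).continuousAt
  have hint' : IntervalIntegrable (fun t => t * g t) volume T U :=
    (intervalIntegrable_iff_integrableOn_Ioc_of_le (le_max_left T B)).2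
      (hint.mono_set (Ioc_subset_Icc_self.trans Icc_subset_Ici_self))
  have hrest : ∫ t in T..U, (1 - G t) ≤ exp (-(c * T)) / c :=
    (intervalIntegral.integral_mono_on (le_max_left T B)
      ((continuous_const.sub hGc).intervalIntegrable _ _)
      ((by fun_prop : Continuous fun t => exp (-(c * t))).intervalIntegrable _ _)
      fun t ht => htail t ht.1).trans (integral_exp_neg_mul_le hc)
  rw [hsplit, integral_mul_deriv_eq hG (hB U (le_max_right T B)) hint']
  calc T * (1 - G T) + ∫ t in T..U, (1 - G t) ≤ T * exp (-(c * T)) + exp (-(c * T)) / c :=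
        add_le_add (mul_le_mul_of_nonneg_left (htail T le_rfl) hT) hrest
    _ = (T + 1 / c) * exp (-(c * T)) := by ring

end TailIntegral

lemma one_lt_log_one_div {ε : ℝ} (hε0 : 0 < ε) (hε : ε < 1 / 4) : 1 < log (1 / ε) := by
  rw [lt_log_iff_exp_lt (by positivity), lt_div_iff₀ hε0]
  nlinarith [exp_one_lt_d9]

lemma tail_integral_bound_arith {q ε : ℝ} (hq : 0 < q) (hε0 : 0 < ε) (hε : ε < 1 / 4) :
    (2 * (2 * q) * log (1 / ε) + 1 / (log 2 / q)) *
        exp (-(log 2 / q * (2 * (2 * q) * log (1 / ε))))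
      ≤ 36 * (2 * q) * ε * log (1 / ε) := by
  have hL := one_lt_log_one_div hε0 hε
  set L := log (1 / ε) with hLdef
  have hlog2 : 1 / 2 < log 2 := by linarith [log_two_gt_d9]
  have hexp : exp (-(log 2 / q * (2 * (2 * q) * L))) ≤ ε ^ 2 := calc
    exp (-(log 2 / q * (2 * (2 * q) * L))) ≤ exp (2 * -L) :=
      exp_le_exp.2 (by field_simp; nlinarith)
    _ = ε ^ 2 := by
      rw [← exp_log hε0, ← exp_nat_mul, hLdef, one_div, log_inv, neg_neg]
      norm_num
  have hinv : 1 / (log 2 / q) ≤ 2 * q := by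
    rw [one_div_div, div_le_iff₀ (by linarith)]
    nlinarith
  calc (2 * (2 * q) * L + 1 / (log 2 / q)) * exp (-(log 2 / q * (2 * (2 * q) * L)))
      ≤ (2 * (2 * q) * L + 2 * q) * ε ^ 2 :=
        mul_le_mul (by linarith) hexp (exp_pos _).le (by positivity)
    _ ≤ 6 * q * L * ε :=
        mul_le_mul (by nlinarith) (by nlinarith) (sq_nonneg ε) (by positivity)
    _ ≤ 36 * (2 * q) * ε * L := by
        nlinarith [mul_pos (mul_pos hq hε0) (by linarith : (0:ℝ) < L)]

theorem mhr_extreme_value_general (n : ℕ) (hn : 0 < n) (a b : Fin n → ℝ)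
    (ha : ∀ i, 0 ≤ a i)
    (F f : Fin n → ℝ → ℝ)
    (hFmono : ∀ i, Monotone (F i))
    (hF0 : ∀ i, ∀ x ≤ a i, F i x = 0) (hF1 : ∀ i x, b i ≤ x → F i x = 1)
    (hderiv : ∀ i x, HasDerivAt (F i) (f i x) x)
    (hMHR : ∀ i, MonotoneOn (fun x => f i x / (1 - F i x)) (Set.Ico (a i) (b i))) :
    ∃ β : ℝ, 0 < β ∧
      1 - (Real.sqrt (Real.exp 1))⁻¹ ≤ 1 - ∏ i, F i (β / 2) ∧
      ∀ ε ∈ Set.Ioo (0 : ℝ) (1 / 4),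
        ∫ t in Set.Ici (2 * β * Real.log (1 / ε)),
            t * (∑ i, f i t * ∏ j ∈ Finset.univ.erase i, F j t)
          ≤ 36 * β * ε * Real.log (1 / ε) := by
  have : Nonempty (Fin n) := ⟨⟨0, hn⟩⟩
  obtain ⟨q, hq0, hGq⟩ := exists_pos_prod_cdf_eq ha
    (fun i => continuous_iff_continuousAt.2 fun x => (hderiv i x).continuousAt) hF0 hF1
    (exp_pos (-(1 / 2))) (exp_le_one_iff.2 (by norm_num))
  refine ⟨2 * q, by positivity, ?_, fun ε ⟨hε0, hε⟩ => ?_⟩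
  · rw [mul_div_cancel_left₀ q two_ne_zero, hGq, ← exp_half, ← exp_neg]
  have hL := one_lt_log_one_div hε0 hε
  have hGd : ∀ t, HasDerivAt (fun t => ∏ i, F i t)
      (∑ i, f i t * ∏ j ∈ Finset.univ.erase i, F j t) t := fun t => by
    simpa [mul_comm] using HasDerivAt.fun_finsetProd fun i _ => hderiv i t
  have htail : ∀ t, 2 * (2 * q) * log (1 / ε) ≤ t →
      1 - ∏ i, F i t ≤ exp (-(log 2 / q * t)) := fun t ht => by
    refine (one_sub_prod_cdf_le_half_rpow ha hFmono hF0 hF1 hderiv hMHR hq0 hGq.ge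
      (by nlinarith)).trans_eq ?_
    rw [rpow_def_of_pos (by norm_num), one_div, log_inv]
    ring_nf
  exact (setIntegral_Ici_mul_deriv_le (by positivity) (div_pos (log_pos one_lt_two) hq0) hGd
    (fun t => prod_cdf_eq_one hF1) htail).trans (tail_integral_bound_arith hq0 hε0 hε)

/-- **Extreme value theorem for MHR distributions.**
Let `X_1, …, X_n` be independent (not necessarily identically distributed) nonnegative
random variables, where `X i` has cdf `F i` with density `f i` supported on `[a i, b i]`
and monotone hazard rate.  Then there is an anchoring point `β > 0` such that
`Pr[max_i X_i ≥ β/2] ≥ 1 - 1/√e` (here `Pr[max_i X_i ≥ c] = 1 - ∏ i, F i c`), and for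
every `ε ∈ (0, 1/4)`,
`∫_{2β log(1/ε)}^∞ t · f_max t dt ≤ 36 β ε log(1/ε)`,
where `f_max t = ∑ i, f i t * ∏_{j ≠ i} F j t` is the density of `max_i X_i`. -/
theorem mhr_extreme_value (n : ℕ) (hn : 0 < n) (a b : Fin n → ℝ)
    (ha : ∀ i, 0 ≤ a i) (hab : ∀ i, a i < b i)
    (F f : Fin n → ℝ → ℝ)
    (hFmono : ∀ i, Monotone (F i)) (hFcont : ∀ i, Continuous (F i))
    (hF0 : ∀ i, ∀ x ≤ a i, F i x = 0) (hF1 : ∀ i x, b i ≤ x → F i x = 1)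
    (hderiv : ∀ i x, HasDerivAt (F i) (f i x) x)
    (hMHR : ∀ i, MonotoneOn (fun x => f i x / (1 - F i x)) (Set.Ico (a i) (b i))) :
    ∃ β : ℝ, 0 < β ∧
      1 - (Real.sqrt (Real.exp 1))⁻¹ ≤ 1 - ∏ i, F i (β / 2) ∧
      ∀ ε ∈ Set.Ioo (0 : ℝ) (1 / 4),
        ∫ t in Set.Ici (2 * β * Real.log (1 / ε)),
            t * (∑ i, f i t * ∏ j ∈ Finset.univ.erase i, F j t)
          ≤ 36 * β * ε * Real.log (1 / ε) :=
  mhr_extreme_value_general n hn a b ha F f hFmono hF0 hF1 hderiv hMHR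
end

section
/- Let F be a regular distribution with revenue curve R_F(q) = q·F^{-1}(1-q). If 0 < q̃ ≤ q ≤ p < 1, then R_F(q̃) ≤ R_F(q)/(1-p). -/
/-!
Put `X = F⁻¹(1 - q)`, `Y = F⁻¹(1 - q̃)` and `c = R_F(q̃) = q̃ Y`. The function
`ψ t = (1 - F t) t - F t c`, i.e. `R_F(s) - (1 - s) c` at `s = 1 - F t`, has derivative
`-f t (φ t + c)`, where `φ` is the virtual value `t - (1 - F t) / f t`. Regularity (`φ`
nondecreasing) makes `ψ` first nondecreasing, then nonincreasing, so on `[a, Y]` it is at least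
`min (ψ a) (ψ Y) = min a (q̃² Y) ≥ 0`. At `t = X` this reads `(1 - q) R_F(q̃) ≤ R_F(q)`.
-/

open Set

theorem min_le_of_hasDerivAt_of_monotoneOn {φ ψ ψ' : ℝ → ℝ} {a y x : ℝ}
    (hφ : MonotoneOn φ (Ioo a y)) (hψ : ContinuousOn ψ (Icc a y))
    (hψ' : ∀ t ∈ Ioo a y, HasDerivAt ψ (ψ' t) t)
    (hneg : ∀ t ∈ Ioo a y, φ t < 0 → 0 ≤ ψ' t)
    (hnonneg : ∀ t ∈ Ioo a y, 0 ≤ φ t → ψ' t ≤ 0)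
    (hx : x ∈ Icc a y) : min (ψ a) (ψ y) ≤ ψ x := by
  by_cases h : ∃ t ∈ Ioo x y, φ t < 0
  · obtain ⟨t, ht, hφt⟩ := h
    have hsub : Ioo a x ⊆ Ioo a y := Ioo_subset_Ioo_right hx.2
    have hmono : MonotoneOn ψ (Icc a x) := by
      refine monotoneOn_of_hasDerivWithinAt_nonneg (f' := ψ') (convex_Icc a x)
        (hψ.mono (Icc_subset_Icc_right hx.2)) (fun s hs => ?_) (fun s hs => ?_) <;>
        rw [interior_Icc] at hs
      · exact (hψ' s (hsub hs)).hasDerivWithinAt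
      · have hst : s ≤ t := hs.2.le.trans ht.1.le
        exact hneg s (hsub hs)
          ((hφ (hsub hs) ⟨hx.1.trans_lt ht.1, ht.2⟩ hst).trans_lt hφt)
    exact min_le_of_left_le (hmono (left_mem_Icc.2 hx.1) (right_mem_Icc.2 hx.1) hx.1)
  · push Not at h
    have hsub : Ioo x y ⊆ Ioo a y := Ioo_subset_Ioo_left hx.1
    have hanti : AntitoneOn ψ (Icc x y) := by
      refine antitoneOn_of_hasDerivWithinAt_nonpos (f' := ψ') (convex_Icc x y)
        (hψ.mono (Icc_subset_Icc_left hx.1)) (fun s hs => ?_) (fun s hs => ?_) <;>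
        rw [interior_Icc] at hs
      · exact (hψ' s (hsub hs)).hasDerivWithinAt
      · exact hnonneg s (hsub hs) (h s hs)
    exact min_le_of_right_le (hanti (left_mem_Icc.2 hx.2) (right_mem_Icc.2 hx.2) hx.2)

section Regular

variable {a b : ℝ} {F f : ℝ → ℝ}

theorem hasDerivAt_one_sub_mul_sub_mul (c t : ℝ) (hF : HasDerivAt F (f t) t) (hf : f t ≠ 0) :
    HasDerivAt (fun t => (1 - F t) * t - F t * c)
      (-(f t * (t - (1 - F t) / f t + c))) t := by
  refine (((hF.const_sub 1).mul (hasDerivAt_id' t)).sub (hF.mul_const c)).congr_deriv ?_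
  field_simp
  ring

theorem mul_quantile_le_of_regular (ha : 0 ≤ a)
    (hderiv : ∀ x ∈ Icc a b, HasDerivAt F (f x) x)
    (hfpos : ∀ x ∈ Ioo a b, 0 < f x)
    (hreg : MonotoneOn (fun x => x - (1 - F x) / f x) (Ioo a b))
    (hFa : F a = 0) {x y s : ℝ} (hx : x ∈ Icc a y) (hy : y ≤ b) (hs : 0 ≤ s)
    (hFy : F y = 1 - s) : F x * (s * y) ≤ (1 - F x) * x := by
  have hIoo : Ioo a y ⊆ Ioo a b := Ioo_subset_Ioo_right hy
  have hFcont : ContinuousOn F (Icc a y) := fun t ht =>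
    (hderiv t ⟨ht.1, ht.2.trans hy⟩).continuousAt.continuousWithinAt
  have hmin := min_le_of_hasDerivAt_of_monotoneOn (ψ := fun t => (1 - F t) * t - F t * (s * y))
    (φ := fun t => t - (1 - F t) / f t + s * y)
    (fun u hu v hv huv => add_le_add_left (hreg (hIoo hu) (hIoo hv) huv) _)
    (by fun_prop)
    (fun t ht => hasDerivAt_one_sub_mul_sub_mul _ t (hderiv t (Ioo_subset_Icc_self (hIoo ht)))
      (hfpos t (hIoo ht)).ne')
    (fun t ht hφ => neg_nonneg.2 (mul_nonpos_of_nonneg_of_nonpos (hfpos t (hIoo ht)).le hφ.le))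
    (fun t ht hφ => neg_nonpos.2 (mul_nonneg (hfpos t (hIoo ht)).le hφ)) hx
  have hy0 : 0 ≤ y := ha.trans (hx.1.trans hx.2)
  have hψ_nonneg : 0 ≤ min ((1 - F a) * a - F a * (s * y)) ((1 - F y) * y - F y * (s * y)) := by
    rw [hFa, hFy]
    refine le_min (by linarith) ?_
    nlinarith [mul_nonneg (mul_nonneg hs hs) hy0]
  linarith [hψ_nonneg.trans hmin]

end Regular

/-- **Little gain from the tail of a regular distribution.**
Let `F` be a differentiable regular distribution supported on `[a, b] ⊆ ℝ≥0`, with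
revenue curve `R_F q = q * Finv (1 - q)` (where `Finv` is the inverse of `F` on the
support).  If `0 < q̃ ≤ q ≤ p < 1`, then `R_F q̃ ≤ R_F q / (1 - p)`. -/
theorem regular_revenue_little_gain (a b : ℝ) (ha : 0 ≤ a) (hab : a < b)
    (F f Finv : ℝ → ℝ)
    (hFmono : Monotone F) (hFcont : Continuous F)
    (hF0 : ∀ x ≤ a, F x = 0) (hF1 : ∀ x, b ≤ x → F x = 1)
    (hderiv : ∀ x ∈ Set.Icc a b, HasDerivAt F (f x) x)
    (hfpos : ∀ x ∈ Set.Ioo a b, 0 < f x)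
    (hreg : MonotoneOn (fun x => x - (1 - F x) / f x) (Set.Ioo a b))
    (hFinv : ∀ x ∈ Set.Icc a b, Finv (F x) = x)
    (qt q p : ℝ) (hqt : 0 < qt) (hq : qt ≤ q) (hqp : q ≤ p) (hp : p < 1) :
    qt * Finv (1 - qt) ≤ (q * Finv (1 - q)) / (1 - p) := by
  have hsurj : Icc (0 : ℝ) 1 ⊆ F '' Icc a b := by
    simpa [hF0 a le_rfl, hF1 b le_rfl] using intermediate_value_Icc hab.le hFcont.continuousOn
  obtain ⟨X, hX, hFX⟩ := hsurj (show 1 - q ∈ Icc 0 1 from ⟨by linarith, by linarith⟩)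
  obtain ⟨Y, hY, hFY⟩ := hsurj (show 1 - qt ∈ Icc 0 1 from ⟨by linarith, by linarith⟩)
  rw [← hFX, ← hFY, hFinv X hX, hFinv Y hY]
  have hXY : X ≤ Y :=
    ((hFmono.monotoneOn _).strictMonoOn_of_injOn (LeftInvOn.injOn hFinv)).le_iff_le hX hY
      |>.1 (by linarith)
  have hkey := mul_quantile_le_of_regular ha hderiv hfpos hreg (hF0 a le_rfl) ⟨hX.1, hXY⟩ hY.2
    hqt.le hFY
  rw [hFX, sub_sub_cancel] at hkey
  have hRqt : 0 ≤ qt * Y := mul_nonneg hqt.le (ha.trans hY.1)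
  rw [le_div_iff₀ (by linarith)]
  calc qt * Y * (1 - p) ≤ (1 - q) * (qt * Y) := by nlinarith
    _ ≤ q * X := hkey
end

section
/- Let X be a random variable with regular distribution F on nonnegative reals, let α_i be a point with F(α_i) ∈ [c_1, c_2] for constants 0 < c_1 < c_2 ≤ 7/8, and suppose n³ ≥ 1/(1-c_2). If α ≥ (n³/c_1)·α_i·(1-F(α_i)), then α ≥ α_{n³}, where α_{n³} = inf{x : F(x) ≥ 1 - 1/n³}. -/
/-!
Write `R x = x (1 - F x)` for the revenue and `φ x = x - (1 - F x) / f x` for the virtual value.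
For a fixed `y`, the function `R + φ y • F` has derivative `f (φ y - φ)`, so regularity makes it
peak at `y`. Comparing its values at `y`, at the lower end `a ≥ 0` of the support and at any `x`
with `F y ≤ F x` gives `F y · R x ≤ R y`. Taking `y = αi` and `x` the `1 - 1/n³` quantile `x₀`,
where `R x₀ = x₀ / n³`, yields `x₀ ≤ (n³ / c₁) · R αi ≤ α`.
-/

open Set

noncomputable section

namespace RegularDistribution

def revenue (F : ℝ → ℝ) (x : ℝ) : ℝ := x * (1 - F x)

def virtualValue (F f : ℝ → ℝ) (x : ℝ) : ℝ := x - (1 - F x) / f x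

variable {a b : ℝ} {F f : ℝ → ℝ}

theorem hasDerivAt_revenue_add_mul {x : ℝ} (K : ℝ) (hF : HasDerivAt F (f x) x) (hf : f x ≠ 0) :
    HasDerivAt (fun t => revenue F t + K * F t) (f x * (K - virtualValue F f x)) x := by
  have h := ((hasDerivAt_id x).mul ((hasDerivAt_const x 1).sub hF)).add
    ((hasDerivAt_const x K).mul hF)
  refine h.congr_deriv ?_
  simp only [virtualValue, id_eq, Pi.sub_apply]
  field_simp
  ring

section

variable (hcont : ContinuousOn F (Icc a b)) (hderiv : ∀ x ∈ Ioo a b, HasDerivAt F (f x) x)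
  (hfpos : ∀ x ∈ Ioo a b, 0 < f x) (hreg : MonotoneOn (virtualValue F f) (Ioo a b))
include hcont hderiv hfpos hreg

theorem isMaxOn_revenue_add_virtualValue_mul {y : ℝ} (hy : y ∈ Ioo a b) :
    IsMaxOn (fun t => revenue F t + virtualValue F f y * F t) (Icc a b) y := by
  set G := fun t => revenue F t + virtualValue F f y * F t
  have hGcont : ContinuousOn G (Icc a b) := by
    unfold G revenue
    fun_prop
  have hG : ∀ x ∈ Ioo a b, HasDerivAt G (f x * (virtualValue F f y - virtualValue F f x)) x :=
    fun x hx => hasDerivAt_revenue_add_mul _ (hderiv x hx) (hfpos x hx).ne'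
  have hGdiff : DifferentiableOn ℝ G (Ioo a b) :=
    fun x hx => (hG x hx).differentiableAt.differentiableWithinAt
  have hmono : MonotoneOn G (Icc a y) := by
    refine monotoneOn_of_deriv_nonneg (convex_Icc a y) (hGcont.mono (Icc_subset_Icc_right hy.2.le))
      (by rw [interior_Icc]; exact hGdiff.mono (Ioo_subset_Ioo_right hy.2.le)) ?_
    rw [interior_Icc]
    intro x hx
    have hxab : x ∈ Ioo a b := ⟨hx.1, hx.2.trans hy.2⟩
    rw [(hG x hxab).deriv]
    exact mul_nonneg (hfpos x hxab).le (sub_nonneg.2 (hreg hxab hy hx.2.le))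
  have hanti : AntitoneOn G (Icc y b) := by
    refine antitoneOn_of_deriv_nonpos (convex_Icc y b) (hGcont.mono (Icc_subset_Icc_left hy.1.le))
      (by rw [interior_Icc]; exact hGdiff.mono (Ioo_subset_Ioo_left hy.1.le)) ?_
    rw [interior_Icc]
    intro x hx
    have hxab : x ∈ Ioo a b := ⟨hy.1.trans hx.1, hx.2⟩
    rw [(hG x hxab).deriv]
    exact mul_nonpos_of_nonneg_of_nonpos (hfpos x hxab).le (sub_nonpos.2 (hreg hy hxab hx.1.le))
  intro x hx
  rcases le_total x y with hxy | hyx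
  · exact hmono ⟨hx.1, hxy⟩ ⟨hy.1.le, le_rfl⟩ hxy
  · exact hanti ⟨le_rfl, hy.2.le⟩ ⟨hyx, hx.2⟩ hyx

theorem mul_revenue_le_revenue (ha : 0 ≤ a) (hFa : F a = 0) {x y : ℝ} (hy : y ∈ Ioo a b)
    (hx : x ∈ Icc a b) (hFy : 0 ≤ F y) (hFyx : F y ≤ F x) (hFx : F x ≤ 1) :
    F y * revenue F x ≤ revenue F y := by
  have hmax := isMaxOn_revenue_add_virtualValue_mul hcont hderiv hfpos hreg hy
  have hGx : revenue F x + virtualValue F f y * F x ≤ revenue F y + virtualValue F f y * F y :=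
    hmax hx
  have hGa : revenue F a + virtualValue F f y * F a ≤ revenue F y + virtualValue F f y * F y :=
    hmax ⟨le_rfl, (hy.1.trans hy.2).le⟩
  -- The peak value dominates the value `a ≥ 0` at the left end.
  have hK : -revenue F y ≤ virtualValue F f y * F y := by
    simp only [revenue, hFa] at hGa ⊢
    linarith
  have hGx' : revenue F x ≤ revenue F y + virtualValue F f y * (F y - F x) := by linarith
  calc F y * revenue F x
      ≤ F y * revenue F y + virtualValue F f y * F y * (F y - F x) := by
        nlinarith [mul_le_mul_of_nonneg_left hGx' hFy]
    _ ≤ F y * revenue F y + -revenue F y * (F y - F x) := by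
        linarith [mul_le_mul_of_nonpos_right hK (sub_nonpos.2 hFyx)]
    _ = revenue F y * F x := by ring
    _ ≤ revenue F y := by
        refine mul_le_of_le_one_right ?_ hFx
        exact mul_nonneg (ha.trans hy.1.le) (by linarith)

end

end RegularDistribution

end

open RegularDistribution in
theorem regular_anchor_dominates_quantile_general (a b : ℝ) (ha : 0 ≤ a) (hab : a < b)
    (F f : ℝ → ℝ)
    (hF0 : ∀ x ≤ a, F x = 0) (hF1 : ∀ x, b ≤ x → F x = 1)
    (hderiv : ∀ x ∈ Set.Icc a b, HasDerivAt F (f x) x)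
    (hfpos : ∀ x ∈ Set.Ioo a b, 0 < f x)
    (hreg : MonotoneOn (fun x => x - (1 - F x) / f x) (Set.Ioo a b))
    (c1 c2 : ℝ) (hc1 : 0 < c1) (hc2 : c2 ≤ 7 / 8)
    (n : ℕ) (hn : 1 / (1 - c2) ≤ (n : ℝ) ^ 3)
    (αi α : ℝ) (hαi : F αi ∈ Set.Icc c1 c2)
    (hα : ((n : ℝ) ^ 3 / c1) * (αi * (1 - F αi)) ≤ α) :
    sInf {x : ℝ | 1 - 1 / (n : ℝ) ^ 3 ≤ F x} ≤ α := by
  set p : ℝ := (n : ℝ) ^ 3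
  have hp : 0 < p := lt_of_lt_of_le (one_div_pos.2 (by linarith)) hn
  have hc2q : c2 ≤ 1 - 1 / p := by
    have := (one_div_le (by linarith) hp).1 hn
    linarith
  have hq1 : 1 - 1 / p ≤ 1 := by simp [hp.le]
  have hFa := hF0 a le_rfl
  have hcont : ContinuousOn F (Icc a b) :=
    fun x hx => (hderiv x hx).continuousAt.continuousWithinAt
  obtain ⟨x₀, hx₀, hFx₀⟩ : ∃ x₀ ∈ Icc a b, F x₀ = 1 - 1 / p :=
    intermediate_value_Icc hab.le hcont ⟨by linarith [hαi.1, hαi.2], by rwa [hF1 b le_rfl]⟩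
  have hαi_mem : αi ∈ Ioo a b :=
    ⟨lt_of_not_ge fun h => by linarith [hF0 αi h, hαi.1],
     lt_of_not_ge fun h => by linarith [hF1 αi h, hαi.2]⟩
  have hkey : F αi * revenue F x₀ ≤ revenue F αi :=
    mul_revenue_le_revenue hcont (fun x hx => hderiv x (Ioo_subset_Icc_self hx)) hfpos hreg ha hFa
      hαi_mem hx₀ (by linarith [hαi.1]) (by linarith [hαi.2]) (hFx₀.trans_le hq1)
  have hx₀p : 0 ≤ x₀ / p := div_nonneg (ha.trans hx₀.1) hp.le
  have hx₀α : x₀ ≤ α := calc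
    x₀ = p / c1 * (c1 * (x₀ / p)) := by field_simp
    _ ≤ p / c1 * (F αi * revenue F x₀) := by
        rw [revenue, hFx₀, sub_sub_cancel, ← div_eq_mul_one_div]
        gcongr
        exact hαi.1
    _ ≤ p / c1 * revenue F αi := by gcongr
    _ ≤ α := hα
  have hbdd : BddBelow {x : ℝ | 1 - 1 / p ≤ F x} :=
    ⟨a, fun x hx => le_of_not_gt fun h => by linarith [hF0 x h.le, hx.out, hαi.1, hαi.2]⟩
  exact (csInf_le hbdd hFx₀.ge).trans hx₀α

/-- **The "center" α dominates the `1 - 1/n³` quantile (regular distributions).**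
Let `X` have a differentiable regular distribution `F` supported on `[a, b] ⊆ ℝ≥0`,
let `αi` be a `(c₁, c₂)`-anchoring point (`F αi ∈ [c₁, c₂]`, `0 < c₁ < c₂ ≤ 7/8`),
and suppose `n³ ≥ 1/(1 - c₂)`.  If `α ≥ (n³/c₁) · αi · (1 - F αi)`, then
`α ≥ α_{n³} = inf {x | F x ≥ 1 - 1/n³}`. -/
theorem regular_anchor_dominates_quantile (a b : ℝ) (ha : 0 ≤ a) (hab : a < b)
    (F f : ℝ → ℝ)
    (hFmono : Monotone F) (hFcont : Continuous F)
    (hF0 : ∀ x ≤ a, F x = 0) (hF1 : ∀ x, b ≤ x → F x = 1)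
    (hderiv : ∀ x ∈ Set.Icc a b, HasDerivAt F (f x) x)
    (hfpos : ∀ x ∈ Set.Ioo a b, 0 < f x)
    (hreg : MonotoneOn (fun x => x - (1 - F x) / f x) (Set.Ioo a b))
    (c1 c2 : ℝ) (hc1 : 0 < c1) (hc12 : c1 < c2) (hc2 : c2 ≤ 7 / 8)
    (n : ℕ) (hn : 1 / (1 - c2) ≤ (n : ℝ) ^ 3)
    (αi α : ℝ) (hαi : F αi ∈ Set.Icc c1 c2)
    (hα : ((n : ℝ) ^ 3 / c1) * (αi * (1 - F αi)) ≤ α) :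
    sInf {x : ℝ | 1 - 1 / (n : ℝ) ^ 3 ≤ F x} ≤ α :=
  regular_anchor_dominates_quantile_general a b ha hab F f hF0 hF1 hderiv hfpos hreg c1 c2 hc1 hc2 n
    hn αi α hαi hα
end

section
/- Let X be a regular random variable and α ≥ α_{n³} (i.e., Pr[X ≥ α] ≤ 1/n³), with n ≥ 2. Then for all ℓ ≥ 1, Pr[X ≥ ℓ·α] ≤ 2/(ℓ·n³). -/
/-!
With `c = φ(α)`, where `φ(x) = x - (1 - F x) / f x` is the virtual value, the function
`G(t) = t (1 - F t) + c F t` has derivative `f t (c - φ t)`. Regularity makes `G` increase on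
`[a, α]` and decrease on `[α, β]`, so `a = G a ≤ G α` and `G β ≤ G α`. Eliminating `c` gives
`β (1 - F β) F α ≤ α (1 - F α) F β`, the concavity of the revenue curve in quantile space.
For `β = ℓ α`, `1 - F α ≤ 1/n³` and `F α ≥ 1/2` this yields `ℓ (1 - F (ℓ α)) ≤ 2/n³`.
-/

open Set

noncomputable section

def virtualValue (F f : ℝ → ℝ) (x : ℝ) : ℝ := x - (1 - F x) / f x

def revenue (F : ℝ → ℝ) (x : ℝ) : ℝ := x * (1 - F x)

end

theorem hasDerivAt_revenue_add_mul {F f : ℝ → ℝ} {x : ℝ} (c : ℝ) (hF : HasDerivAt F (f x) x)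
    (hf : f x ≠ 0) :
    HasDerivAt (fun t => revenue F t + c * F t) (f x * (c - virtualValue F f x)) x := by
  refine (((hasDerivAt_id' x).mul (hF.const_sub 1)).add (hF.const_mul c)).congr_deriv ?_
  unfold virtualValue
  field_simp
  ring

section Monotonicity

variable {F f : ℝ → ℝ} {c lo hi : ℝ}

theorem continuousOn_revenue_add_mul (hFc : ContinuousOn F (Icc lo hi)) :
    ContinuousOn (fun t => revenue F t + c * F t) (Icc lo hi) := by
  unfold revenue
  fun_prop

theorem monotoneOn_revenue_add_mul (hFc : ContinuousOn F (Icc lo hi))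
    (hF : ∀ x ∈ Ioo lo hi, HasDerivAt F (f x) x) (hf : ∀ x ∈ Ioo lo hi, 0 < f x)
    (hφ : ∀ x ∈ Ioo lo hi, virtualValue F f x ≤ c) :
    MonotoneOn (fun t => revenue F t + c * F t) (Icc lo hi) := by
  refine monotoneOn_of_hasDerivWithinAt_nonneg (f' := fun x => f x * (c - virtualValue F f x))
    (convex_Icc lo hi)
    (continuousOn_revenue_add_mul hFc) (fun x hx => ?_) (fun x hx => ?_) <;>
    rw [interior_Icc] at hx
  · exact (hasDerivAt_revenue_add_mul c (hF x hx) (hf x hx).ne').hasDerivWithinAt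
  · exact mul_nonneg (hf x hx).le (sub_nonneg.2 (hφ x hx))

theorem antitoneOn_revenue_add_mul (hFc : ContinuousOn F (Icc lo hi))
    (hF : ∀ x ∈ Ioo lo hi, HasDerivAt F (f x) x) (hf : ∀ x ∈ Ioo lo hi, 0 < f x)
    (hφ : ∀ x ∈ Ioo lo hi, c ≤ virtualValue F f x) :
    AntitoneOn (fun t => revenue F t + c * F t) (Icc lo hi) := by
  refine antitoneOn_of_hasDerivWithinAt_nonpos (f' := fun x => f x * (c - virtualValue F f x))
    (convex_Icc lo hi)
    (continuousOn_revenue_add_mul hFc) (fun x hx => ?_) (fun x hx => ?_) <;>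
    rw [interior_Icc] at hx
  · exact (hasDerivAt_revenue_add_mul c (hF x hx) (hf x hx).ne').hasDerivWithinAt
  · exact mul_nonpos_of_nonneg_of_nonpos (hf x hx).le (sub_nonpos.2 (hφ x hx))

end Monotonicity

theorem revenue_mul_le_revenue_mul {F f : ℝ → ℝ} {a b α β : ℝ} (ha : 0 ≤ a) (hFa : F a = 0)
    (hFmono : Monotone F) (hFcont : Continuous F)
    (hderiv : ∀ x ∈ Ioo a b, HasDerivAt F (f x) x) (hfpos : ∀ x ∈ Ioo a b, 0 < f x)
    (hreg : MonotoneOn (virtualValue F f) (Ioo a b))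
    (hα : α ∈ Ioo a b) (hαβ : α ≤ β) (hβ : β ≤ b) :
    revenue F β * F α ≤ revenue F α * F β := by
  set c := virtualValue F f α
  have hleft : Ioo a α ⊆ Ioo a b := Ioo_subset_Ioo_right hα.2.le
  have hright : Ioo α β ⊆ Ioo a b := Ioo_subset_Ioo hα.1.le hβ
  have hrise : a ≤ revenue F α + c * F α := by
    have := monotoneOn_revenue_add_mul (c := c) hFcont.continuousOn
      (fun x hx => hderiv x (hleft hx)) (fun x hx => hfpos x (hleft hx))
      (fun x hx => hreg (hleft hx) hα hx.2.le)
      (left_mem_Icc.2 hα.1.le) (right_mem_Icc.2 hα.1.le) hα.1.le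
    simpa [revenue, hFa] using this
  have hfall : revenue F β + c * F β ≤ revenue F α + c * F α :=
    antitoneOn_revenue_add_mul hFcont.continuousOn
      (fun x hx => hderiv x (hright hx)) (fun x hx => hfpos x (hright hx))
      (fun x hx => hreg hα (hright hx) hx.1.le)
      (left_mem_Icc.2 hαβ) (right_mem_Icc.2 hαβ) hαβ
  have hFα : 0 ≤ F α := hFa ▸ hFmono hα.1.le
  have hFαβ : F α ≤ F β := hFmono hαβ
  nlinarith [mul_le_mul_of_nonneg_right hfall hFα]

theorem regular_tail_decay_general (a b : ℝ) (ha : 0 ≤ a)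
    (F f : ℝ → ℝ)
    (hFmono : Monotone F) (hFcont : Continuous F)
    (hF0 : ∀ x ≤ a, F x = 0) (hF1 : ∀ x, b ≤ x → F x = 1)
    (hderiv : ∀ x ∈ Set.Icc a b, HasDerivAt F (f x) x)
    (hfpos : ∀ x ∈ Set.Ioo a b, 0 < f x)
    (hreg : MonotoneOn (fun x => x - (1 - F x) / f x) (Set.Ioo a b))
    (n : ℕ) (hn : 2 ≤ n) (α : ℝ) (hα : 1 - F α ≤ 1 / (n : ℝ) ^ 3) :
    ∀ ℓ : ℝ, 1 ≤ ℓ → 1 - F (ℓ * α) ≤ 2 / (ℓ * (n : ℝ) ^ 3) := by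
  intro ℓ hℓ
  set N : ℝ := (n : ℝ) ^ 3
  have hN : 2 ≤ N := by
    have : (2 : ℝ) ≤ n := by exact_mod_cast hn
    exact le_trans (by norm_num) (pow_le_pow_left₀ zero_le_two this 3)
  have hFα : 1 / 2 ≤ F α := by
    linarith [one_div_le_one_div_of_le two_pos hN]
  have haα : a < α := lt_of_not_ge fun h => by linarith [hF0 α h]
  have hα0 : 0 < α := ha.trans_lt haα
  have hαβ : α ≤ ℓ * α := le_mul_of_one_le_left hα0.le hℓ
  rcases le_or_gt b (ℓ * α) with hb | hb
  · rw [hF1 _ hb, sub_self]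
    positivity
  have hFβ : F (ℓ * α) ≤ 1 := hF1 b le_rfl ▸ hFmono hb.le
  have key := revenue_mul_le_revenue_mul ha (hF0 a le_rfl) hFmono hFcont
    (fun x hx => hderiv x (Ioo_subset_Icc_self hx)) hfpos hreg ⟨haα, hαβ.trans_lt hb⟩ hαβ hb.le
  have hdecay : ℓ * (1 - F (ℓ * α)) * F α ≤ 1 - F α := by
    unfold revenue at key
    have : α * (ℓ * (1 - F (ℓ * α)) * F α) ≤ α * ((1 - F α) * F (ℓ * α)) := by linarith
    have hFα1 : F α ≤ 1 := (hFmono hαβ).trans hFβ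
    exact (le_of_mul_le_mul_left this hα0).trans
      (mul_le_of_le_one_right (sub_nonneg.2 hFα1) hFβ)
  have hαN : (1 - F α) * N ≤ 1 := (le_div_iff₀ (by positivity)).1 hα
  rw [le_div_iff₀ (by positivity)]
  nlinarith

/-- **Tail decay of regular distributions.**
Let `X` have a differentiable regular distribution `F` supported on `[a, b] ⊆ ℝ≥0`,
let `n ≥ 2`, and let `α` satisfy `Pr[X ≥ α] = 1 - F α ≤ 1/n³` (i.e. `α ≥ α_{n³}`).
Then for all `ℓ ≥ 1`, `Pr[X ≥ ℓ·α] = 1 - F (ℓ·α) ≤ 2/(ℓ·n³)`. -/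
theorem regular_tail_decay (a b : ℝ) (ha : 0 ≤ a) (hab : a < b)
    (F f : ℝ → ℝ)
    (hFmono : Monotone F) (hFcont : Continuous F)
    (hF0 : ∀ x ≤ a, F x = 0) (hF1 : ∀ x, b ≤ x → F x = 1)
    (hderiv : ∀ x ∈ Set.Icc a b, HasDerivAt F (f x) x)
    (hfpos : ∀ x ∈ Set.Ioo a b, 0 < f x)
    (hreg : MonotoneOn (fun x => x - (1 - F x) / f x) (Set.Ioo a b))
    (n : ℕ) (hn : 2 ≤ n) (α : ℝ) (hα : 1 - F α ≤ 1 / (n : ℝ) ^ 3) :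
    ∀ ℓ : ℝ, 1 ≤ ℓ → 1 - F (ℓ * α) ≤ 2 / (ℓ * (n : ℝ) ^ 3) :=
  regular_tail_decay_general a b ha F f hFmono hFcont hF0 hF1 hderiv hfpos hreg n hn α hα
end
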